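/- arXiv:2106.04057 — 2 statements merged into one kernel-verified Lean document; each statement's English description precedes it below -/
import Mathlib

section
/- The map Φ(t,r) = (arctan(t−r) + arctan(t+r), arctan(t+r) − arctan(t−r)) is a bijection from ℝ × [0,∞) onto the set {(τ,ζ) ∈ ℝ² : ζ ≥ 0 and |τ| + ζ < π}. -/
open Real

theorem penrose_map_bijOn :
    Set.BijOn
      (fun p : ℝ × ℝ =>
        (Real.arctan (p.1 - p.2) + Real.arctan (p.1 + p.2),
         Real.arctan (p.1 + p.2) - Real.arctan (p.1 - p.2)))
      {p : ℝ × ℝ | 0 ≤ p.2}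
      {q : ℝ × ℝ | 0 ≤ q.2 ∧ |q.1| + q.2 < Real.pi} := by
  refine ⟨?_, ?_, ?_⟩
  · rintro ⟨t, r⟩ hr
    simp only [Set.mem_setOf_eq] at hr ⊢
    have hmono : Real.arctan (t - r) ≤ Real.arctan (t + r) := by
      exact Real.arctan_strictMono.monotone (by linarith)
    have h1 := Real.arctan_lt_pi_div_two (t + r)
    have h2 := Real.neg_pi_div_two_lt_arctan (t - r)
    refine ⟨by linarith, ?_⟩
    rcases abs_cases (Real.arctan (t - r) + Real.arctan (t + r)) with ⟨h, _⟩ | ⟨h, _⟩ <;>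
      rw [h] <;> linarith
  · rintro ⟨t1, r1⟩ h1 ⟨t2, r2⟩ h2 heq
    simp only [Prod.mk.injEq] at heq
    obtain ⟨e1, e2⟩ := heq
    have ha : Real.arctan (t1 - r1) = Real.arctan (t2 - r2) := by linarith
    have hb : Real.arctan (t1 + r1) = Real.arctan (t2 + r2) := by linarith
    have ha' := Real.arctan_injective ha
    have hb' := Real.arctan_injective hb
    have : t1 = t2 := by linarith
    have : r1 = r2 := by linarith
    simp_all
  · rintro ⟨τ, ζ⟩ ⟨hζ, hlt⟩
    simp only [Set.mem_setOf_eq] at hζ hlt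
    set a := (τ - ζ) / 2 with ha_def
    set b := (τ + ζ) / 2 with hb_def
    have habs1 : -τ ≤ |τ| := neg_le_abs τ
    have habs2 : τ ≤ |τ| := le_abs_self τ
    have hpi : (0:ℝ) < π := Real.pi_pos
    have haI : a ∈ Set.Ioo (-(π/2)) (π/2) := by
      constructor <;> simp only [ha_def] <;> [skip; skip] <;> linarith
    have hbI : b ∈ Set.Ioo (-(π/2)) (π/2) := by
      constructor <;> simp only [hb_def] <;> linarith
    have hab : a ≤ b := by simp only [ha_def, hb_def]; linarith
    have htan : Real.tan a ≤ Real.tan b :=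
      Real.strictMonoOn_tan.monotoneOn haI hbI hab
    refine ⟨((Real.tan a + Real.tan b) / 2, (Real.tan b - Real.tan a) / 2), ?_, ?_⟩
    · simp only [Set.mem_setOf_eq]; linarith
    · have e1 : (Real.tan a + Real.tan b) / 2 - (Real.tan b - Real.tan a) / 2 = Real.tan a := by ring
      have e2 : (Real.tan a + Real.tan b) / 2 + (Real.tan b - Real.tan a) / 2 = Real.tan b := by ring
      simp only [e1, e2, Real.arctan_tan haI.1 haI.2, Real.arctan_tan hbI.1 hbI.2]
      have : a + b = τ := by simp only [ha_def, hb_def]; ring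
      have : b - a = ζ := by simp only [ha_def, hb_def]; ring
      simp_all
end

section
/- Let V, g, l, n, m be as follows: g symmetric bilinear, g(l,l) = g(n,n) = 0, g(l,n) = 1, g(m,·) vanishing on l and n. With T as above (sums over subsets S of {1,...,N} of size k with weights c_k ≥ 0, plus terms containing m-factors), evaluating N−1 of the arguments at (l+n)/√2 and the remaining (first) argument at n gives Σ_{k=0}^{N−1} (1/√2)^{N−1} C(N−1, k) · c_k', where the surviving coefficients c_k' correspond to the terms in which the first tensor slot carries an l factor. -/
open Real Finset

theorem null_flux_contraction
    (V : Type*) [AddCommGroup V] [Module ℝ V]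
    (g : V →ₗ[ℝ] V →ₗ[ℝ] ℝ) (hg : ∀ x y, g x y = g y x)
    (l n m : V)
    (hll : g l l = 0) (hnn : g n n = 0) (hln : g l n = 1)
    (hml : g m l = 0) (hmn : g m n = 0) (hmm : g m m = 0)
    (N : ℕ) (c : ℕ → ℝ) (hc : ∀ k, 0 ≤ c k)
    (A : (Fin (N + 1) → V) → ℝ)
    (hA : ∀ X : Fin (N + 1) → V, (∀ i, g m (X i) = 0) → A X = 0)
    (T : (Fin (N + 1) → V) → ℝ)
    (hT : ∀ X : Fin (N + 1) → V,
      T X = (∑ k ∈ Finset.range (N + 2), c k *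
          ∑ S ∈ Finset.powersetCard k (Finset.univ : Finset (Fin (N + 1))),
            (∏ i ∈ S, g n (X i)) * ∏ i ∈ Sᶜ, g l (X i)) + A X)
    (τ : V) (hτ : τ = (Real.sqrt 2)⁻¹ • (l + n)) :
    T (fun i => if i = 0 then n else τ)
      = ∑ k ∈ Finset.range (N + 1),
          ((Real.sqrt 2)⁻¹) ^ N * (N.choose k : ℝ) * c k := by
  set s : ℝ := (Real.sqrt 2)⁻¹ with hs
  set X : Fin (N + 1) → V := fun i => if i = 0 then n else τ with hX
  have hnl : g n l = 1 := by rw [hg]; exact hln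
  have hnt : g n τ = s := by
    rw [hτ]; simp [map_add, map_smul, hnl, hnn, smul_eq_mul]
  have hlt : g l τ = s := by
    rw [hτ]; simp [map_add, map_smul, hll, hln, smul_eq_mul]
  have hmt : g m τ = 0 := by
    rw [hτ]; simp [map_add, map_smul, hml, hmn]
  have hA0 : A X = 0 := by
    apply hA; intro i
    by_cases h : i = 0 <;> simp [hX, h, hmn, hmt]
  have key : ∀ k ∈ Finset.range (N + 2),
      ∑ S ∈ Finset.powersetCard k (Finset.univ : Finset (Fin (N + 1))),
        (∏ i ∈ S, g n (X i)) * ∏ i ∈ Sᶜ, g l (X i) = s ^ N * (N.choose k : ℝ) := by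
    intro k _
    rw [← Finset.sum_filter_add_sum_filter_not _ (fun S => (0 : Fin (N + 1)) ∈ S)]
    have h1 : ∑ S ∈ (Finset.powersetCard k (Finset.univ : Finset (Fin (N + 1)))).filter
        (fun S => (0 : Fin (N + 1)) ∈ S),
        (∏ i ∈ S, g n (X i)) * ∏ i ∈ Sᶜ, g l (X i) = 0 := by
      apply Finset.sum_eq_zero
      intro S hS
      rw [Finset.mem_filter] at hS
      have : ∏ i ∈ S, g n (X i) = 0 := by
        apply Finset.prod_eq_zero hS.2
        simp [hX, hnn]
      rw [this, zero_mul]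
    have h2 : ∀ S ∈ (Finset.powersetCard k (Finset.univ : Finset (Fin (N + 1)))).filter
        (fun S => ¬ (0 : Fin (N + 1)) ∈ S),
        (∏ i ∈ S, g n (X i)) * ∏ i ∈ Sᶜ, g l (X i) = s ^ N := by
      intro S hS
      rw [Finset.mem_filter, Finset.mem_powersetCard] at hS
      obtain ⟨⟨_, hcard⟩, h0⟩ := hS
      have hsub : S ⊆ (Finset.univ : Finset (Fin (N + 1))).erase 0 := by
        rw [Finset.subset_erase]; exact ⟨Finset.subset_univ S, h0⟩
      have hkle : k ≤ N := by
        have := Finset.card_le_card hsub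
        rwa [Finset.card_erase_of_mem (Finset.mem_univ 0), Finset.card_univ,
          Fintype.card_fin, Nat.add_sub_cancel, hcard] at this
      have hp1 : ∏ i ∈ S, g n (X i) = s ^ k := by
        rw [← hcard]
        rw [Finset.prod_congr rfl (fun i hi => ?_), Finset.prod_const]
        have : i ≠ 0 := fun h => h0 (h ▸ hi)
        simp [hX, this, hnt]
      have h0c : (0 : Fin (N + 1)) ∈ Sᶜ := Finset.mem_compl.mpr h0
      have hp2 : ∏ i ∈ Sᶜ, g l (X i) = s ^ (N - k) := by
        rw [← Finset.mul_prod_erase _ _ h0c]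
        have hgl0 : g l (X 0) = 1 := by simp [hX, hln]
        rw [hgl0, one_mul]
        rw [Finset.prod_congr rfl (fun i hi => ?_), Finset.prod_const,
          Finset.card_erase_of_mem h0c, Finset.card_compl, Fintype.card_fin, hcard]
        · congr 1
          omega
        · have := Finset.mem_erase.mp hi
          simp [hX, this.1, hlt]
      rw [hp1, hp2, ← pow_add, Nat.add_sub_cancel' hkle]
    rw [h1, Finset.sum_congr rfl h2, Finset.sum_const, nsmul_eq_mul, zero_add]
    have hfcard : (Finset.powersetCard k (Finset.univ : Finset (Fin (N + 1)))).filter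
        (fun S => ¬ (0 : Fin (N + 1)) ∈ S)
        = Finset.powersetCard k ((Finset.univ : Finset (Fin (N + 1))).erase 0) := by
      ext S
      simp only [Finset.mem_filter, Finset.mem_powersetCard, Finset.subset_erase]
      tauto
    rw [hfcard, Finset.card_powersetCard, Finset.card_erase_of_mem (Finset.mem_univ 0),
      Finset.card_univ, Fintype.card_fin, Nat.add_sub_cancel]
    ring
  rw [hT, hA0, add_zero, Finset.sum_congr rfl (fun k hk => by rw [key k hk]),
    Finset.sum_range_succ]
  simp only [Nat.choose_succ_self, Nat.cast_zero, mul_zero, zero_mul, add_zero]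
  exact Finset.sum_congr rfl fun k _ => by ring
end
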